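/- arXiv:2302.03247 — 5 statements merged into one kernel-verified Lean document; each statement's English description precedes it below -/
import Mathlib

section
/- Let g be a continuous real-valued function on [0, ∞), let a > 0, h ≥ 0, and s0 ∈ ℝ with s0 ∉ {0, −1}. Define F : (0, ∞) → ℝ by F(P) = P^{-1} ∫₀^P g(√(p² + h²)) dp. Then ∫₀¹ g(√(a²(s + s0)² + h²)) ds = (1 + s0) · F(a·|1 + s0|) − s0 · F(a·|s0|). -/
/-!
Writing `G p = g (√(p² + h²))`, the substitution `p = a (s + s0)` turns the left side into
`a⁻¹ (∫₀^{a(1+s0)} G - ∫₀^{a s0} G)`. Since `G` is even, `y * F |y| = ∫₀^y G` for every real `y`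
(also for `y < 0`, and trivially for `y = 0`), which is the right side after multiplying by `a`.
-/

open intervalIntegral

theorem intervalIntegral.integral_zero_neg_of_even {E : Type*} [NormedAddCommGroup E]
    [NormedSpace ℝ E] {f : ℝ → E} (hf : ∀ x, f (-x) = f x) (y : ℝ) :
    ∫ x in (0 : ℝ)..-y, f x = -∫ x in (0 : ℝ)..y, f x := by
  have h := integral_comp_neg (a := 0) (b := -y) f
  simp only [hf, neg_neg, neg_zero] at h
  rw [h, integral_symm]

theorem mul_integral_zero_abs_div_abs_of_even {f : ℝ → ℝ} (hf : ∀ x, f (-x) = f x) (y : ℝ) :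
    y * ((∫ x in (0 : ℝ)..|y|, f x) / |y|) = ∫ x in (0 : ℝ)..y, f x := by
  rcases eq_or_ne y 0 with rfl | hy
  · simp
  rcases abs_choice y with hab | hab <;> rw [hab]
  · field_simp
  · rw [integral_zero_neg_of_even hf]
    field_simp

theorem integral_unit_comp_mul_add {f : ℝ → ℝ} (hf : Continuous f) {c : ℝ} (hc : c ≠ 0)
    (d : ℝ) :
    ∫ s in (0 : ℝ)..1, f (c * (s + d))
      = c⁻¹ * ((∫ x in (0 : ℝ)..c * (1 + d), f x) - ∫ x in (0 : ℝ)..c * d, f x) := by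
  simp only [mul_add]
  rw [integral_comp_mul_add f hc, integral_interval_sub_left (hf.intervalIntegrable _ _)
    (hf.intervalIntegrable _ _)]
  simp

theorem stmt_4_general (g : ℝ → ℝ) (hg : ContinuousOn g (Set.Ici 0))
    (a h s0 : ℝ) (ha : 0 < a)
    (F : ℝ → ℝ)
    (hF : F = fun P => (∫ p in (0:ℝ)..P, g (Real.sqrt (p ^ 2 + h ^ 2))) / P) :
    ∫ s in (0:ℝ)..1, g (Real.sqrt (a ^ 2 * (s + s0) ^ 2 + h ^ 2))
      = (1 + s0) * F (a * |1 + s0|) - s0 * F (a * |s0|) := by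
  set G : ℝ → ℝ := fun p => g (Real.sqrt (p ^ 2 + h ^ 2))
  have hG : Continuous G :=
    hg.comp_continuous (by fun_prop) fun _ => Real.sqrt_nonneg _
  have hG_even : ∀ p, G (-p) = G p := fun p => by simp [G]
  have hF_mul : ∀ x, a * x * F (a * |x|) = ∫ p in (0 : ℝ)..a * x, G p := fun x => by
    rw [hF, show a * |x| = |a * x| by rw [abs_mul, abs_of_pos ha]]
    exact mul_integral_zero_abs_div_abs_of_even hG_even (a * x)
  calc ∫ s in (0:ℝ)..1, g (Real.sqrt (a ^ 2 * (s + s0) ^ 2 + h ^ 2))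
      = ∫ s in (0:ℝ)..1, G (a * (s + s0)) := by simp only [G, mul_pow]
    _ = a⁻¹ * ((∫ p in (0 : ℝ)..a * (1 + s0), G p) - ∫ p in (0 : ℝ)..a * s0, G p) :=
      integral_unit_comp_mul_add hG ha.ne' s0
    _ = (1 + s0) * F (a * |1 + s0|) - s0 * F (a * |s0|) := by
      rw [← hF_mul, ← hF_mul]
      field_simp

/-- The terminal 1D evaluation step: the integral along a unit segment is expressed
through the level-1 primitive boundary function at the endpoints. -/
theorem stmt_4 (g : ℝ → ℝ) (hg : ContinuousOn g (Set.Ici 0))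
    (a h s0 : ℝ) (ha : 0 < a) (hh : 0 ≤ h) (hs0 : s0 ≠ 0) (hs0' : s0 ≠ -1)
    (F : ℝ → ℝ)
    (hF : F = fun P => (∫ p in (0:ℝ)..P, g (Real.sqrt (p ^ 2 + h ^ 2))) / P) :
    ∫ s in (0:ℝ)..1, g (Real.sqrt (a ^ 2 * (s + s0) ^ 2 + h ^ 2))
      = (1 + s0) * F (a * |1 + s0|) - s0 * F (a * |s0|) :=
  stmt_4_general g hg a h s0 ha F hF
end

section
/- For all real numbers h > 0 and P > 0, ∫₀^P [ (p² − 2h²)·√(p² + h²) + 2h³ ] / p² dp = (1/2) · [ P·√(P² + h²) − 3h² · ln( (P + √(P² + h²)) / h ) + 4h² · (√(P² + h²) − h) / P ]. -/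
/-! Writing `s = √(p² + h²)`, so that `p² = s² - h² = (s - h)(s + h)`, the numerator equals
`p² s - 2h² (s - h) = p² (s - 2h² / (s + h))`; the integrand is therefore the continuous function
`s - 2h² / (s + h)` on `[0, P]` (at `p = 0` both sides vanish). That function has the elementary
antiderivative `(p s - 3h² log (p + s)) / 2 + 2h² p / (s + h)`. -/

open Real

theorem hasDerivAt_sqrt_sq_add {c x : ℝ} (hx : x ^ 2 + c ≠ 0) :
    HasDerivAt (fun y => √(y ^ 2 + c)) (x / √(x ^ 2 + c)) x := by
  have hsq : HasDerivAt (fun y => y ^ 2 + c) (2 * x) x := by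
    simpa using (hasDerivAt_pow 2 x).add_const c
  convert hsq.sqrt hx using 1
  field_simp

theorem add_sqrt_sq_add_pos {c : ℝ} (hc : 0 < c) (x : ℝ) : 0 < x + √(x ^ 2 + c) := by
  have hlt : |x| < √(x ^ 2 + c) := by
    rw [← sqrt_sq_eq_abs]
    exact sqrt_lt_sqrt (sq_nonneg x) (by linarith)
  linarith [neg_abs_le x]

theorem hasDerivAt_log_add_sqrt_sq_add {c : ℝ} (hc : 0 < c) (x : ℝ) :
    HasDerivAt (fun y => log (y + √(y ^ 2 + c))) (1 / √(x ^ 2 + c)) x := by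
  have hpos := add_sqrt_sq_add_pos hc x
  have hsum : HasDerivAt (fun y => y + √(y ^ 2 + c)) (1 + x / √(x ^ 2 + c)) x :=
    (hasDerivAt_id' x).add (hasDerivAt_sqrt_sq_add (by positivity))
  convert hsum.log hpos.ne' using 1
  field_simp
  ring

section LevelThree

variable {h : ℝ}

theorem level3_integrand_eq (hh : 0 < h) (p : ℝ) :
    ((p ^ 2 - 2 * h ^ 2) * √(p ^ 2 + h ^ 2) + 2 * h ^ 3) / p ^ 2
      = √(p ^ 2 + h ^ 2) - 2 * h ^ 2 / (√(p ^ 2 + h ^ 2) + h) := by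
  rcases eq_or_ne p 0 with rfl | hp
  · rw [zero_pow two_ne_zero, div_zero, zero_add, sqrt_sq hh.le]
    field_simp
    ring
  · have hsq : √(p ^ 2 + h ^ 2) ^ 2 = p ^ 2 + h ^ 2 := sq_sqrt (by positivity)
    field_simp
    linear_combination (-2 * h ^ 2) * hsq

theorem hasDerivAt_level3_antideriv (hh : 0 < h) (p : ℝ) :
    HasDerivAt
      (fun p => (p * √(p ^ 2 + h ^ 2) - 3 * h ^ 2 * log (p + √(p ^ 2 + h ^ 2))) / 2
        + 2 * h ^ 2 * p / (√(p ^ 2 + h ^ 2) + h))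
      (√(p ^ 2 + h ^ 2) - 2 * h ^ 2 / (√(p ^ 2 + h ^ 2) + h)) p := by
  have hc : 0 < h ^ 2 := by positivity
  have hsq : √(p ^ 2 + h ^ 2) ^ 2 = p ^ 2 + h ^ 2 := sq_sqrt (by positivity)
  have dS := hasDerivAt_sqrt_sq_add (x := p) (c := h ^ 2) (by positivity)
  have dL := hasDerivAt_log_add_sqrt_sq_add hc p
  have dQ := ((hasDerivAt_id' p).const_mul (2 * h ^ 2)).div (dS.add_const h) (by positivity)
  refine ((((hasDerivAt_id' p).mul dS).sub (dL.const_mul (3 * h ^ 2))).div_const 2).add dQ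
    |>.congr_deriv ?_
  field_simp
  linear_combination (4 * h ^ 2 - (√(p ^ 2 + h ^ 2) + h) ^ 2) * hsq

end LevelThree

/-- Level-3 PBF integral (cases #6, #7):
∫₀^P [(p²−2h²)√(p²+h²)+2h³]/p² dp
  = (1/2)[P√(P²+h²) − 3h² ln((P+√(P²+h²))/h) + 4h²(√(P²+h²)−h)/P]. -/
theorem stmt_7 (h P : ℝ) (hh : 0 < h) (hP : 0 < P) :
    ∫ p in (0:ℝ)..P, ((p ^ 2 - 2 * h ^ 2) * Real.sqrt (p ^ 2 + h ^ 2) + 2 * h ^ 3) / p ^ 2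
      = (1 / 2) * (P * Real.sqrt (P ^ 2 + h ^ 2)
          - 3 * h ^ 2 * Real.log ((P + Real.sqrt (P ^ 2 + h ^ 2)) / h)
          + 4 * h ^ 2 * (Real.sqrt (P ^ 2 + h ^ 2) - h) / P) := by
  have hcont : Continuous fun p : ℝ => √(p ^ 2 + h ^ 2) - 2 * h ^ 2 / (√(p ^ 2 + h ^ 2) + h) := by
    fun_prop (disch := intro p; positivity)
  simp only [level3_integrand_eq hh]
  rw [intervalIntegral.integral_eq_sub_of_hasDerivAt
    (fun p _ => hasDerivAt_level3_antideriv hh p) (hcont.intervalIntegrable 0 P)]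
  have hsq : √(P ^ 2 + h ^ 2) ^ 2 = P ^ 2 + h ^ 2 := sq_sqrt (by positivity)
  rw [log_div (add_sqrt_sq_add_pos (by positivity) P).ne' hh.ne']
  simp only [zero_pow two_ne_zero, zero_add, sqrt_sq hh.le, zero_mul, zero_sub, mul_zero,
    zero_div, add_zero]
  field_simp
  linear_combination (-4 * h ^ 2) * hsq
end

section
/- For all real numbers h > 0 and P > 0, writing R(p) = √(p² + h²), ∫₀^P [ R(p)/p − (h²/p²) · ln( (p + R(p)) / h ) ] dp = √(P² + h²) − 2h + (h²/P) · ln( (P + √(P² + h²)) / h ). -/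
/-! The integrand is the derivative on `p > 0` of
`F p = √(p² + h²) + (h² / p) log ((p + √(p² + h²)) / h)`, and `F p → 2h` as `p → 0⁺`
because the logarithm vanishes at `0` with derivative `1 / h` there. The integral is
improper at `0`, but the integrand is nonnegative: `p²` times it,
`p √(p² + h²) - h² log ((p + √(p² + h²)) / h)`, vanishes at `0` and has derivative
`2p² / √(p² + h²)`. For a nonnegative derivative the fundamental theorem of calculus
needs no separate integrability argument. -/

open Real Set Filter Topology MeasureTheory intervalIntegral

theorem integral_eq_sub_of_hasDerivAt_of_tendsto_of_nonneg {f f' : ℝ → ℝ} {a b fa fb : ℝ}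
    (hab : a < b) (hderiv : ∀ x ∈ Ioo a b, HasDerivAt f (f' x) x)
    (hpos : ∀ x ∈ Ioo a b, 0 ≤ f' x) (ha : Tendsto f (𝓝[>] a) (𝓝 fa))
    (hb : Tendsto f (𝓝[<] b) (𝓝 fb)) :
    ∫ x in a..b, f' x = fb - fa := by
  set F := Function.update (Function.update f a fa) b fb
  have hF : ∀ x ∈ Ioo a b, F x = f x := fun x hx => by
    simp [F, Function.update_of_ne hx.1.ne', Function.update_of_ne hx.2.ne]
  have hFderiv : ∀ x ∈ Ioo a b, HasDerivAt F (f' x) x := fun x hx =>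
    (hderiv x hx).congr_of_eventuallyEq <|
      eventually_of_mem (Ioo_mem_nhds hx.1 hx.2) hF
  have hcont : ContinuousOn F (Icc a b) := by
    rw [continuousOn_update_iff, continuousOn_update_iff, Icc_sdiff_right, Ico_sdiff_left]
    refine ⟨⟨fun x hx => (hderiv x hx).continuousAt.continuousWithinAt,
      fun _ => ha.mono_left (nhdsWithin_mono _ Ioo_subset_Ioi_self)⟩, fun _ => ?_⟩
    refine (hb.congr' ?_).mono_left (nhdsWithin_mono _ Ico_subset_Iio_self)
    filter_upwards [Ioo_mem_nhdsLT hab] with x hx using (Function.update_of_ne hx.1.ne' _ _).symm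
  have hint : IntervalIntegrable f' volume a b :=
    (intervalIntegrable_iff_integrableOn_Ioc_of_le hab.le).2
      (integrableOn_deriv_of_nonneg hcont hFderiv hpos)
  exact integral_eq_sub_of_hasDerivAt_of_tendsto hab hderiv hint ha hb

section

variable {h : ℝ}

theorem hasDerivAt_sqrt_sq_add_sq (hh : h ≠ 0) (p : ℝ) :
    HasDerivAt (fun q => √(q ^ 2 + h ^ 2)) (p / √(p ^ 2 + h ^ 2)) p := by
  convert ((hasDerivAt_pow 2 p).add_const (h ^ 2)).sqrt (by positivity) using 1
  ring

theorem add_sqrt_sq_add_sq_pos (hh : h ≠ 0) (p : ℝ) : 0 < p + √(p ^ 2 + h ^ 2) := by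
  have : |p| < √(p ^ 2 + h ^ 2) := by
    rw [← sqrt_sq_eq_abs]
    exact sqrt_lt_sqrt (sq_nonneg p) (by simpa using pow_pos (abs_pos.2 hh) 2)
  linarith [neg_abs_le p]

theorem hasDerivAt_log_add_sqrt (hh : h ≠ 0) (p : ℝ) :
    HasDerivAt (fun q => log ((q + √(q ^ 2 + h ^ 2)) / h)) (√(p ^ 2 + h ^ 2))⁻¹ p := by
  have hpos := add_sqrt_sq_add_sq_pos hh p
  have hR : √(p ^ 2 + h ^ 2) ≠ 0 := by positivity
  have hsum : HasDerivAt (fun q => q + √(q ^ 2 + h ^ 2)) (1 + p / √(p ^ 2 + h ^ 2)) p :=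
    (hasDerivAt_id' p).add (hasDerivAt_sqrt_sq_add_sq hh p)
  convert (hsum.div_const h).log (div_ne_zero hpos.ne' hh) using 1
  field_simp
  ring

theorem tendsto_sqrt_add_div_mul_log (hh : 0 < h) :
    Tendsto (fun p => √(p ^ 2 + h ^ 2) + h ^ 2 / p * log ((p + √(p ^ 2 + h ^ 2)) / h))
      (𝓝[≠] 0) (𝓝 (2 * h)) := by
  have hslope := (hasDerivAt_log_add_sqrt hh.ne' 0).tendsto_slope
  have hR := (hasDerivAt_sqrt_sq_add_sq hh.ne' 0).continuousAt.tendsto.mono_left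
    (nhdsWithin_le_nhds (s := {0}ᶜ))
  simp only [slope_fun_def_field, ne_eq, OfNat.ofNat_ne_zero, not_false_eq_true, zero_pow,
    zero_add, sqrt_sq hh.le, div_self hh.ne', log_one, sub_zero] at hslope hR
  convert hR.add (hslope.const_mul (h ^ 2)) using 2
  · field_simp
  · field_simp; ring

theorem hasDerivAt_sqrt_add_div_mul_log (hh : h ≠ 0) {p : ℝ} (hp : p ≠ 0) :
    HasDerivAt (fun q => √(q ^ 2 + h ^ 2) + h ^ 2 / q * log ((q + √(q ^ 2 + h ^ 2)) / h))
      (√(p ^ 2 + h ^ 2) / p - h ^ 2 / p ^ 2 * log ((p + √(p ^ 2 + h ^ 2)) / h)) p := by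
  have hR : √(p ^ 2 + h ^ 2) ^ 2 = p ^ 2 + h ^ 2 := sq_sqrt (by positivity)
  have hR0 : √(p ^ 2 + h ^ 2) ≠ 0 := by positivity
  have hdiv : HasDerivAt (fun q => h ^ 2 / q) (-(h ^ 2) / p ^ 2) p := by
    simpa [div_eq_mul_inv] using (hasDerivAt_inv hp).const_mul (h ^ 2)
  refine ((hasDerivAt_sqrt_sq_add_sq hh p).fun_add
    (hdiv.fun_mul (hasDerivAt_log_add_sqrt hh p))).congr_deriv ?_
  field_simp
  linear_combination -p * hR

theorem monotone_mul_sqrt_sub_mul_log (hh : h ≠ 0) :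
    Monotone fun p => p * √(p ^ 2 + h ^ 2) - h ^ 2 * log ((p + √(p ^ 2 + h ^ 2)) / h) := by
  have hderiv (p : ℝ) : HasDerivAt
      (fun p => p * √(p ^ 2 + h ^ 2) - h ^ 2 * log ((p + √(p ^ 2 + h ^ 2)) / h))
      (2 * p ^ 2 / √(p ^ 2 + h ^ 2)) p := by
    have hR : √(p ^ 2 + h ^ 2) ^ 2 = p ^ 2 + h ^ 2 := sq_sqrt (by positivity)
    have hR0 : √(p ^ 2 + h ^ 2) ≠ 0 := by positivity
    refine (((hasDerivAt_id' p).fun_mul (hasDerivAt_sqrt_sq_add_sq hh p)).fun_sub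
      ((hasDerivAt_log_add_sqrt hh p).const_mul (h ^ 2))).congr_deriv ?_
    field_simp
    linear_combination hR
  exact monotone_of_deriv_nonneg (fun p => (hderiv p).differentiableAt)
    fun p => (hderiv p).deriv ▸ by positivity

theorem sqrt_div_sub_div_mul_log_nonneg (hh : 0 < h) {p : ℝ} (hp : 0 < p) :
    0 ≤ √(p ^ 2 + h ^ 2) / p - h ^ 2 / p ^ 2 * log ((p + √(p ^ 2 + h ^ 2)) / h) := by
  have hg := monotone_mul_sqrt_sub_mul_log hh.ne' hp.le
  simp only [ne_eq, OfNat.ofNat_ne_zero, not_false_eq_true, zero_pow, zero_add, sqrt_sq hh.le,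
    div_self hh.ne', log_one, zero_mul, mul_zero, sub_zero] at hg
  calc 0 ≤ (p * √(p ^ 2 + h ^ 2) - h ^ 2 * log ((p + √(p ^ 2 + h ^ 2)) / h)) / p ^ 2 :=
        div_nonneg hg (sq_nonneg p)
    _ = _ := by field_simp

end

/-- Level-2 PBF integral (case #4):
∫₀^P [R(p)/p − (h²/p²) ln((p+R(p))/h)] dp = √(P²+h²) − 2h + (h²/P) ln((P+√(P²+h²))/h),
where R(p) = √(p²+h²). -/
theorem stmt_8 (h P : ℝ) (hh : 0 < h) (hP : 0 < P) :
    ∫ p in (0:ℝ)..P,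
        (Real.sqrt (p ^ 2 + h ^ 2) / p
          - (h ^ 2 / p ^ 2) * Real.log ((p + Real.sqrt (p ^ 2 + h ^ 2)) / h))
      = Real.sqrt (P ^ 2 + h ^ 2) - 2 * h
          + (h ^ 2 / P) * Real.log ((P + Real.sqrt (P ^ 2 + h ^ 2)) / h) := by
  rw [integral_eq_sub_of_hasDerivAt_of_tendsto_of_nonneg hP
    (fun p hp => hasDerivAt_sqrt_add_div_mul_log hh.ne' hp.1.ne')
    (fun p hp => sqrt_div_sub_div_mul_log_nonneg hh hp.1)
    ((tendsto_sqrt_add_div_mul_log hh).mono_left (nhdsWithin_mono _ fun p hp => ne_of_gt hp))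
    (hasDerivAt_sqrt_add_div_mul_log hh.ne' hP.ne').continuousAt.continuousWithinAt]
  ring
end

section
/- For all real numbers h1 > 0, h3 > 0, and P > 0, setting h = √(h1² + h3²), R1(p) = √(p² + h1²), R4(p) = √(p² + h²), ∫₀^P (1/(p² + h1²)) · [ R4(p) − 2h3 + (h3²/R1(p)) · ln( (R1(p) + R4(p)) / h3 ) ] dp = (1 − h3²/h1²) · ln( (P + R4(P)) / h ) − (2h3/h1) · arctan( h1·P / (h² + h3·R4(P)) ) + (h3²/h1²) · (P/R1(P)) · ln( (R1(P) + R4(P)) / h3 ). -/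
/-!
The right-hand side, as a function of `P`, vanishes at `P = 0` and is a primitive of the
integrand, so the identity is the fundamental theorem of calculus. Each of its three terms has an
elementary derivative (`1 / R₄`, `h₁ / (R₄ (R₄ + h₃))`, and `h₁² / R₁³ · log + p² / (R₁² R₄)`),
and these recombine into the integrand using only `R₁² = p² + h₁²` and `R₄² = R₁² + h₃²`.
-/

open Real

namespace PrimitiveBoundary

lemma hasDerivAt_sqrt_sq_add {c : ℝ} (hc : 0 < c) (x : ℝ) :
    HasDerivAt (fun p ↦ √(p ^ 2 + c)) (x / √(x ^ 2 + c)) x := by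
  refine (((hasDerivAt_pow 2 x).add_const c).sqrt (by positivity)).congr_deriv ?_
  field_simp
  norm_num

lemma hasDerivAt_log_add_sqrt_sq_add {c k : ℝ} (hc : 0 < c) (hk : k ≠ 0) (x : ℝ) :
    HasDerivAt (fun p ↦ log ((p + √(p ^ 2 + c)) / k)) (1 / √(x ^ 2 + c)) x := by
  have hr : |x| < √(x ^ 2 + c) := by
    rw [← sqrt_sq_eq_abs]
    exact sqrt_lt_sqrt (sq_nonneg x) (by linarith)
  have hpos : 0 < x + √(x ^ 2 + c) := by linarith [neg_abs_le x]
  refine ((((hasDerivAt_id x).add (hasDerivAt_sqrt_sq_add hc x)).div_const k).log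
    (by simp only [Pi.add_apply, id]; positivity)).congr_deriv ?_
  simp only [Pi.add_apply, id]
  field_simp
  ring

lemma hasDerivAt_div_sqrt_sq_add {c : ℝ} (hc : 0 < c) (x : ℝ) :
    HasDerivAt (fun p ↦ p / √(p ^ 2 + c)) (c / √(x ^ 2 + c) ^ 3) x := by
  have hs : √(x ^ 2 + c) ^ 2 = x ^ 2 + c := sq_sqrt (by positivity)
  refine ((hasDerivAt_id x).fun_div (hasDerivAt_sqrt_sq_add hc x) (by positivity)).congr_deriv ?_
  simp only [id]
  field_simp
  linear_combination hs

lemma hasDerivAt_log_sqrt_add_sqrt {c₁ c₂ k : ℝ} (hc₁ : 0 < c₁) (hc₂ : 0 < c₂) (hk : k ≠ 0)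
    (x : ℝ) :
    HasDerivAt (fun p ↦ log ((√(p ^ 2 + c₁) + √(p ^ 2 + c₂)) / k))
      (x / (√(x ^ 2 + c₁) * √(x ^ 2 + c₂))) x := by
  refine ((((hasDerivAt_sqrt_sq_add hc₁ x).add (hasDerivAt_sqrt_sq_add hc₂ x)).div_const
    k).log (by simp only [Pi.add_apply]; positivity)).congr_deriv ?_
  simp only [Pi.add_apply]
  field_simp
  ring

lemma hasDerivAt_arctan_mul_div_add_mul_sqrt {a b : ℝ} (hb : 0 < b) (x : ℝ) :
    HasDerivAt (fun p ↦ arctan (a * p / (a ^ 2 + b ^ 2 + b * √(p ^ 2 + (a ^ 2 + b ^ 2)))))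
      (a / (√(x ^ 2 + (a ^ 2 + b ^ 2)) * (√(x ^ 2 + (a ^ 2 + b ^ 2)) + b))) x := by
  have hc : 0 < a ^ 2 + b ^ 2 := by positivity
  have hs : √(x ^ 2 + (a ^ 2 + b ^ 2)) ^ 2 = x ^ 2 + (a ^ 2 + b ^ 2) := sq_sqrt (by positivity)
  refine (((hasDerivAt_id x).const_mul a).fun_div
    (((hasDerivAt_sqrt_sq_add hc x).const_mul b).const_add (a ^ 2 + b ^ 2))
    (by positivity)).arctan.congr_deriv ?_
  simp only [id]
  set r := √(x ^ 2 + (a ^ 2 + b ^ 2))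
  have hr : 0 < r := by positivity
  field_simp
  linear_combination a * (a ^ 2 + b ^ 2 + b * r) * hs

/-- `6 F₁(p; a, 0, b, 0)` in the paper's notation (`h₁ = a`, `h₃ = b`). -/
noncomputable def boundaryPrimitive (a b p : ℝ) : ℝ :=
  (1 - b ^ 2 / a ^ 2) * log ((p + √(p ^ 2 + (a ^ 2 + b ^ 2))) / √(a ^ 2 + b ^ 2))
    - (2 * b / a) * arctan (a * p / ((a ^ 2 + b ^ 2) + b * √(p ^ 2 + (a ^ 2 + b ^ 2))))
    + (b ^ 2 / a ^ 2) * (p / √(p ^ 2 + a ^ 2))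
      * log ((√(p ^ 2 + a ^ 2) + √(p ^ 2 + (a ^ 2 + b ^ 2))) / b)

noncomputable def boundaryIntegrand (a b p : ℝ) : ℝ :=
  (1 / (p ^ 2 + a ^ 2)) * (√(p ^ 2 + (a ^ 2 + b ^ 2)) - 2 * b
    + (b ^ 2 / √(p ^ 2 + a ^ 2)) * log ((√(p ^ 2 + a ^ 2) + √(p ^ 2 + (a ^ 2 + b ^ 2))) / b))

variable {a b : ℝ}

lemma hasDerivAt_boundaryPrimitive (ha : a ≠ 0) (hb : 0 < b) (x : ℝ) :
    HasDerivAt (boundaryPrimitive a b) (boundaryIntegrand a b x) x := by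
  have hc₁ : 0 < a ^ 2 := by positivity
  have hc₂ : 0 < a ^ 2 + b ^ 2 := by positivity
  refine ((((hasDerivAt_log_add_sqrt_sq_add hc₂ (sqrt_pos.2 hc₂).ne' x).const_mul _).sub
    ((hasDerivAt_arctan_mul_div_add_mul_sqrt (a := a) hb x).const_mul _)).add
    (((hasDerivAt_div_sqrt_sq_add hc₁ x).const_mul _).mul
      (hasDerivAt_log_sqrt_add_sqrt hc₁ hc₂ hb.ne' x))).congr_deriv ?_
  simp only [boundaryIntegrand]
  set r₁ := √(x ^ 2 + a ^ 2)
  set r₂ := √(x ^ 2 + (a ^ 2 + b ^ 2))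
  have hs₁ : r₁ ^ 2 = x ^ 2 + a ^ 2 := sq_sqrt (by positivity)
  have hs₂ : r₂ ^ 2 = x ^ 2 + (a ^ 2 + b ^ 2) := sq_sqrt (by positivity)
  have hr₁ : 0 < r₁ := by positivity
  have hr₂ : 0 < r₂ := by positivity
  have hx : x ^ 2 = r₁ ^ 2 - a ^ 2 := by linarith
  field_simp
  rw [hx]
  linear_combination a ^ 2 * r₁ ^ 3 * (r₂ - b) * (hs₁ - hs₂)

lemma continuous_boundaryIntegrand (ha : a ≠ 0) (hb : b ≠ 0) :
    Continuous (boundaryIntegrand a b) := by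
  unfold boundaryIntegrand
  fun_prop (disch := intros; positivity)

lemma boundaryPrimitive_zero (a b : ℝ) : boundaryPrimitive a b 0 = 0 := by
  simp [boundaryPrimitive]

end PrimitiveBoundary

theorem stmt_11_general (h1 h3 P : ℝ) (hh1 : 0 < h1) (hh3 : 0 < h3) :
    (∫ p in (0:ℝ)..P,
        (1 / (p ^ 2 + h1 ^ 2)) *
          (Real.sqrt (p ^ 2 + (h1 ^ 2 + h3 ^ 2)) - 2 * h3
            + (h3 ^ 2 / Real.sqrt (p ^ 2 + h1 ^ 2)) *
                Real.log ((Real.sqrt (p ^ 2 + h1 ^ 2)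
                    + Real.sqrt (p ^ 2 + (h1 ^ 2 + h3 ^ 2))) / h3)))
      = (1 - h3 ^ 2 / h1 ^ 2) *
            Real.log ((P + Real.sqrt (P ^ 2 + (h1 ^ 2 + h3 ^ 2)))
              / Real.sqrt (h1 ^ 2 + h3 ^ 2))
        - (2 * h3 / h1) *
            Real.arctan (h1 * P
              / ((h1 ^ 2 + h3 ^ 2) + h3 * Real.sqrt (P ^ 2 + (h1 ^ 2 + h3 ^ 2))))
        + (h3 ^ 2 / h1 ^ 2) * (P / Real.sqrt (P ^ 2 + h1 ^ 2)) *
            Real.log ((Real.sqrt (P ^ 2 + h1 ^ 2)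
              + Real.sqrt (P ^ 2 + (h1 ^ 2 + h3 ^ 2))) / h3) := by
  have ftc := intervalIntegral.integral_eq_sub_of_hasDerivAt
    (fun x _ ↦ PrimitiveBoundary.hasDerivAt_boundaryPrimitive hh1.ne' hh3 x)
    ((PrimitiveBoundary.continuous_boundaryIntegrand hh1.ne' hh3.ne').intervalIntegrable 0 P)
  rwa [PrimitiveBoundary.boundaryPrimitive_zero, sub_zero] at ftc

/-- Level-1 PBF integral (case #4): with h = √(h₁²+h₃²), R₁(p) = √(p²+h₁²),
R₄(p) = √(p²+h²),
∫₀^P (1/(p²+h₁²))[R₄(p) − 2h₃ + (h₃²/R₁(p)) ln((R₁(p)+R₄(p))/h₃)] dp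
  = (1 − h₃²/h₁²) ln((P+R₄(P))/h) − (2h₃/h₁) arctan(h₁P/(h²+h₃R₄(P)))
    + (h₃²/h₁²)(P/R₁(P)) ln((R₁(P)+R₄(P))/h₃). -/
theorem stmt_11 (h1 h3 P : ℝ) (hh1 : 0 < h1) (hh3 : 0 < h3) (hP : 0 < P) :
    (∫ p in (0:ℝ)..P,
        (1 / (p ^ 2 + h1 ^ 2)) *
          (Real.sqrt (p ^ 2 + (h1 ^ 2 + h3 ^ 2)) - 2 * h3
            + (h3 ^ 2 / Real.sqrt (p ^ 2 + h1 ^ 2)) *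
                Real.log ((Real.sqrt (p ^ 2 + h1 ^ 2)
                    + Real.sqrt (p ^ 2 + (h1 ^ 2 + h3 ^ 2))) / h3)))
      = (1 - h3 ^ 2 / h1 ^ 2) *
            Real.log ((P + Real.sqrt (P ^ 2 + (h1 ^ 2 + h3 ^ 2)))
              / Real.sqrt (h1 ^ 2 + h3 ^ 2))
        - (2 * h3 / h1) *
            Real.arctan (h1 * P
              / ((h1 ^ 2 + h3 ^ 2) + h3 * Real.sqrt (P ^ 2 + (h1 ^ 2 + h3 ^ 2))))
        + (h3 ^ 2 / h1 ^ 2) * (P / Real.sqrt (P ^ 2 + h1 ^ 2)) *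
            Real.log ((Real.sqrt (P ^ 2 + h1 ^ 2)
              + Real.sqrt (P ^ 2 + (h1 ^ 2 + h3 ^ 2))) / h3) :=
  stmt_11_general h1 h3 P hh1 hh3
end

section
/- Let a, c ∈ ℝ³ be linearly independent vectors and set b = −a − c, l1 = ‖a‖, l2 = ‖b‖, l3 = ‖c‖, and p = (l1 + l2 + l3)/2. Then ∫₀¹ ds / ‖s·a + c‖ = (1/l1) · ln( p / (p − l1) ). -/
/-!
With `v s = s • a + c`, the function `log (‖a‖ * ‖v s‖ + ⟪a, v s⟫) / ‖a‖` is an antiderivative of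
`1 / ‖v s‖`; the argument of the logarithm stays positive by the strict Cauchy–Schwarz inequality,
as `a` and `v s` are independent. Since `b = -(a + c)`, the law of cosines
`l₂² = l₁² + 2⟪a, c⟫ + l₃²` factors the arguments at `s = 1` and `s = 0` as `p (l₁ + l₂ - l₃)` and
`(p - l₁) (l₁ + l₂ - l₃)`, and the common factor cancels in the difference of logarithms.
-/

open Real intervalIntegral
open scoped RealInnerProductSpace

theorem LinearIndependent.pair_smul_add {K M : Type*} [Field K] [AddCommGroup M] [Module K M]
    {a c : M} (h : LinearIndependent K ![a, c]) (s : K) :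
    LinearIndependent K ![a, s • a + c] := by
  simpa using (LinearIndependent.pair_add_smul_add_smul_iff (1 : K) 0 s 1).2 ⟨h, by simp⟩

section InnerProductSpace

variable {F : Type*} [NormedAddCommGroup F] [InnerProductSpace ℝ F]

theorem HasDerivAt.norm_of_ne_zero {f : ℝ → F} {f' : F} {x : ℝ} (hf : HasDerivAt f f' x)
    (h0 : f x ≠ 0) : HasDerivAt (fun t => ‖f t‖) (⟪f x, f'⟫ / ‖f x‖) x := by
  have hpos : 0 < ‖f x‖ := norm_pos_iff.2 h0
  have := hf.norm_sq.sqrt (by positivity)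
  simp only [Real.sqrt_sq (norm_nonneg _)] at this
  convert this using 1
  field_simp

theorem abs_real_inner_lt_norm_mul_norm {x y : F} (h : LinearIndependent ℝ ![x, y]) :
    |⟪x, y⟫| < ‖x‖ * ‖y‖ := by
  refine (abs_real_inner_le_norm x y).lt_of_ne fun heq => ?_
  have hx : x ≠ 0 := h.ne_zero 0
  have hy : y ≠ 0 := h.ne_zero 1
  obtain ⟨r, -, rfl⟩ := (norm_inner_eq_norm_iff (𝕜 := ℝ) hx hy).1 (by rwa [Real.norm_eq_abs])
  simpa using LinearIndependent.pair_iff.1 h r (-1) (by simp)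

theorem norm_mul_norm_add_real_inner_pos {x y : F} (h : LinearIndependent ℝ ![x, y]) :
    0 < ‖x‖ * ‖y‖ + ⟪x, y⟫ := by
  linarith [neg_abs_le ⟪x, y⟫, abs_real_inner_lt_norm_mul_norm h]

variable {a c : F}

theorem hasDerivAt_log_norm_mul_norm_smul_add (h : LinearIndependent ℝ ![a, c]) (s : ℝ) :
    HasDerivAt (fun t : ℝ => log (‖a‖ * ‖t • a + c‖ + ⟪a, t • a + c⟫) / ‖a‖)
      (1 / ‖s • a + c‖) s := by
  have hli := h.pair_smul_add s
  have hv : 0 < ‖s • a + c‖ := norm_pos_iff.2 (hli.ne_zero 1)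
  have ha : 0 < ‖a‖ := norm_pos_iff.2 (h.ne_zero 0)
  have hN := norm_mul_norm_add_real_inner_pos hli
  have hline : HasDerivAt (fun t : ℝ => t • a + c) a s := by
    simpa using ((hasDerivAt_id s).smul_const a).add_const c
  have hN' : HasDerivAt (fun t : ℝ => ‖a‖ * ‖t • a + c‖ + ⟪a, t • a + c⟫)
      (‖a‖ * (⟪s • a + c, a⟫ / ‖s • a + c‖) + ‖a‖ ^ 2) s := by
    have hinner : HasDerivAt (fun t : ℝ => ⟪a, t • a + c⟫) (‖a‖ ^ 2) s := by
      simp only [inner_add_right, real_inner_smul_right, real_inner_self_eq_norm_sq]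
      simpa using ((hasDerivAt_id s).mul_const (‖a‖ ^ 2)).add_const ⟪a, c⟫
    exact ((hline.norm_of_ne_zero (hli.ne_zero 1)).const_mul ‖a‖).add hinner
  refine ((hN'.log hN.ne').div_const ‖a‖).congr_deriv ?_
  rw [real_inner_comm]
  field_simp
  ring

theorem integral_one_div_norm_smul_add (h : LinearIndependent ℝ ![a, c]) (x y : ℝ) :
    ∫ s in x..y, 1 / ‖s • a + c‖ =
      log (‖a‖ * ‖y • a + c‖ + ⟪a, y • a + c⟫) / ‖a‖ -
        log (‖a‖ * ‖x • a + c‖ + ⟪a, x • a + c⟫) / ‖a‖ := by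
  refine integral_eq_sub_of_hasDerivAt (fun s _ => hasDerivAt_log_norm_mul_norm_smul_add h s) ?_
  refine (continuous_const.div (by fun_prop) fun s => ?_).intervalIntegrable _ _
  exact norm_ne_zero_iff.2 ((h.pair_smul_add s).ne_zero 1)

theorem log_norm_mul_norm_add_inner_sub (h : LinearIndependent ℝ ![a, c]) :
    log (‖a‖ * ‖a + c‖ + ⟪a, a + c⟫) - log (‖a‖ * ‖c‖ + ⟪a, c⟫) =
      log ((‖a‖ + ‖a + c‖ + ‖c‖) / 2 / ((‖a‖ + ‖a + c‖ + ‖c‖) / 2 - ‖a‖)) := by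
  have hN₁ : ‖a‖ * ‖a + c‖ + ⟪a, a + c⟫ =
      (‖a‖ + ‖a + c‖ + ‖c‖) / 2 * (‖a‖ + ‖a + c‖ - ‖c‖) := by
    rw [inner_add_right, real_inner_self_eq_norm_sq]
    linear_combination (-1 / 2 : ℝ) * norm_add_sq_real a c
  have hN₀ : ‖a‖ * ‖c‖ + ⟪a, c⟫ =
      ((‖a‖ + ‖a + c‖ + ‖c‖) / 2 - ‖a‖) * (‖a‖ + ‖a + c‖ - ‖c‖) := by
    linear_combination (-1 / 2 : ℝ) * norm_add_sq_real a c
  have hac := h.pair_smul_add 1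
  rw [one_smul] at hac
  have hpos₁ := norm_mul_norm_add_real_inner_pos hac
  have hpos₀ := norm_mul_norm_add_real_inner_pos h
  rw [← log_div hpos₁.ne' hpos₀.ne', hN₁, hN₀, mul_div_mul_right]
  rw [hN₁] at hpos₁
  exact right_ne_zero_of_mul hpos₁.ne'

end InnerProductSpace

/-- Terminal 1D integral (sa18) of the self-action single-layer evaluation:
for edge vectors a, b = −a−c, c of a nondegenerate triangle with side lengths
l₁ = ‖a‖, l₂ = ‖b‖, l₃ = ‖c‖ and half-perimeter p,
∫₀¹ ds/‖s·a + c‖ = (1/l₁) ln(p/(p−l₁)). -/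
theorem stmt_16 (a c : EuclideanSpace ℝ (Fin 3))
    (hli : LinearIndependent ℝ ![a, c]) :
    (∫ s in (0:ℝ)..1, 1 / ‖s • a + c‖)
      = (1 / ‖a‖) *
          Real.log (((‖a‖ + ‖-a - c‖ + ‖c‖) / 2)
            / ((‖a‖ + ‖-a - c‖ + ‖c‖) / 2 - ‖a‖)) := by
  rw [integral_one_div_norm_smul_add hli, one_smul, zero_smul, zero_add, ← sub_div,
    log_norm_mul_norm_add_inner_sub hli, ← neg_add', norm_neg, div_eq_inv_mul, one_div]
end
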